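/- Let z ∈ ℂ with z ≠ 0 and z not a nonnegative real number. Define t by t_0 = 1, t_1 = z, and t_j = 0 for all j ≥ 2, and assume 1 + n·z ≠ 0 for all n. Then ζ_n^a = ζ_n^c = (1 + n·|z|)/|1 + n·z| − 1 and the series Σ_{n≥1} ((1 + n·|z|)/|1 + n·z| − 1) diverges (hence the associated ℂSG measure is not of bounded variation). -/

import Mathlib

/-
With `t = (1, z, 0, 0, …)` one has `λ(n,0) = 1 + n z` and `λ(ϖ,1) = z` for `ϖ ≥ 1`, which gives the
closed forms of `ζ_n^a` and `ζ_n^c`. For `A = 1 + n|z|` and `B = |1 + n z|` we have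
`A² - B² = 2n(|z| - Re z)`, and `Re z < |z|` because `z` is not a nonnegative real; hence
`A/B - 1 ≥ c/n` with `c > 0`, and the series diverges like the harmonic series.

For the variation, look at the `n`-nodes that are forests. The past of a vertex `m` with parent `i`
has the single maximal element `i`, so its factor in the amplitude is `z / (1 + m z)`, while a root
has factor `1 / (1 + m z)`. Summing over the choices at each vertex (no parent, or one of the `m`
earlier vertices), the cylinders of forests carry total variation
`∏_{m<n} (1 + m|z|)/|1 + m z| ≥ 1 + Σ_{m<n} (A_m/B_m - 1) → ∞`, while the cylinders of all `n`-nodes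
partition `Ω`.
-/

open MeasureTheory Filter Finset

attribute [local instance] Classical.propDecidable

noncomputable section

/-- A relation on ℕ representing a naturally labelled past-finite causal set:
a strict partial order `r` with `r i j → i < j`. -/
def CausalRel (r : ℕ → ℕ → Prop) : Prop :=
  (∀ i, ¬ r i i) ∧ (∀ i j k, r i j → r j k → r i k) ∧ (∀ i j, r i j → i < j)

/-- Ω, the sample space of naturally labelled past-finite causal sets. -/
def Omega : Type := {r : ℕ → ℕ → Prop // CausalRel r}

/-- An `n`-node: a strict partial order on `Fin n` compatible with the labelling. -/
def IsNode {n : ℕ} (p : Fin n → Fin n → Prop) : Prop :=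
  (∀ i, ¬ p i i) ∧ (∀ i j k, p i j → p j k → p i k) ∧
    (∀ i j : Fin n, p i j → (i : ℕ) < (j : ℕ))

/-- The cylinder set of an `n`-node. -/
def Cyl {n : ℕ} (p : Fin n → Fin n → Prop) : Set Omega :=
  {r | ∀ i j : Fin n, r.1 i.1 j.1 ↔ p i j}

/-- The Boolean set algebra 𝔜 generated by the cylinder sets (and Ω itself) under
finite unions, intersections and complements. -/
inductive InAlg : Set Omega → Prop
  | basic {n : ℕ} (hn : 1 ≤ n) (p : Fin n → Fin n → Prop) (hp : IsNode p) : InAlg (Cyl p)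
  | univ : InAlg Set.univ
  | compl (s : Set Omega) : InAlg s → InAlg sᶜ
  | union (s t : Set Omega) : InAlg s → InAlg t → InAlg (s ∪ t)

/-- Finite additivity of a complex set function on the algebra 𝔜. -/
def FinitelyAdditive (μ : Set Omega → ℂ) : Prop :=
  ∀ s t : Set Omega, InAlg s → InAlg t → Disjoint s t → μ (s ∪ t) = μ s + μ t

/-- A finite partition of Ω into pairwise disjoint members of 𝔜. -/
def IsPartition (π : Finset (Set Omega)) : Prop :=
  (∀ s ∈ π, InAlg s) ∧ ((↑π : Set (Set Omega)).Pairwise Disjoint) ∧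
    ⋃₀ (↑π : Set (Set Omega)) = Set.univ

/-- Bounded variation: the sums Σᵢ |μ(αᵢ)| over finite partitions of Ω into members
of 𝔜 are uniformly bounded. -/
def BoundedVariation (μ : Set Omega → ℂ) : Prop :=
  ∃ M : ℝ, ∀ π : Finset (Set Omega), IsPartition π → ∑ s ∈ π, ‖μ s‖ ≤ M

/-- λ(a,b) = Σ_{k=b}^{a} C(a−b, k−b)·t_k. -/
def lam (t : ℕ → ℂ) (a b : ℕ) : ℂ :=
  ∑ k ∈ Finset.Icc b a, ((a - b).choose (k - b) : ℂ) * t k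

/-- The maximal elements of a finite subset `I` with respect to the relation `c`. -/
def maxIn {n : ℕ} (c : Fin n → Fin n → Prop) (I : Finset (Fin n)) : Finset (Fin n) :=
  I.filter fun i => ∀ j ∈ I, ¬ c i j

/-- The past of the element `m` in the node `p`. -/
def pastOf {n : ℕ} (p : Fin n → Fin n → Prop) (m : Fin n) : Finset (Fin n) :=
  Finset.univ.filter fun i => p i m

/-- The ℂSG amplitude of (the cylinder set of) an `n`-node:
∏_{m=1}^{n−1} λ(ϖ_m, μ_m)/λ(m,0). -/
def amp (t : ℕ → ℂ) {n : ℕ} (p : Fin n → Fin n → Prop) : ℂ :=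
  ∏ m ∈ Finset.univ.filter (fun m : Fin n => 1 ≤ (m : ℕ)),
    lam t (pastOf p m).card (maxIn p (pastOf p m)).card / lam t (m : ℕ) 0

/-- μ is the ℂSG measure associated to the coupling constants t: it is finitely
additive on 𝔜 and takes the prescribed values on cylinder sets. -/
def IsCSG (t : ℕ → ℂ) (μ : Set Omega → ℂ) : Prop :=
  FinitelyAdditive μ ∧
    ∀ (n : ℕ), 1 ≤ n → ∀ p : Fin n → Fin n → Prop, IsNode p → μ (Cyl p) = amp t p

/-- `I` is an order ideal (downward-closed set) of the relation `c`. -/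
def isIdeal {n : ℕ} (c : Fin n → Fin n → Prop) (I : Finset (Fin n)) : Prop :=
  ∀ j ∈ I, ∀ i, c i j → i ∈ I

/-- Q(c) := Σ_{I an order ideal of c} |λ(|I|, m(I))|. -/
def Qval (t : ℕ → ℂ) {n : ℕ} (c : Fin n → Fin n → Prop) : ℝ :=
  ∑ I ∈ Finset.univ.filter (fun I : Finset (Fin n) => isIdeal c I),
    ‖lam t I.card (maxIn c I).card‖

/-- ζ(c) := Q(c)/|λ(n,0)| − 1. -/
def zeta (t : ℕ → ℂ) {n : ℕ} (c : Fin n → Fin n → Prop) : ℝ :=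
  Qval t c / ‖lam t n 0‖ - 1

/-- ζ_n^a := (Σ_{k=0}^{n} C(n,k)·|t_k|)/|λ(n,0)| − 1. -/
def zetaA (t : ℕ → ℂ) (n : ℕ) : ℝ :=
  (∑ k ∈ Finset.range (n + 1), (n.choose k : ℝ) * ‖t k‖) /
    ‖lam t n 0‖ - 1

/-- ζ_n^c := (|t_0| + Σ_{ϖ=1}^{n} |λ(ϖ,1)|)/|λ(n,0)| − 1. -/
def zetaC (t : ℕ → ℂ) (n : ℕ) : ℝ :=
  (‖t 0‖ + ∑ w ∈ Finset.Icc 1 n, ‖lam t w 1‖) /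
    ‖lam t n 0‖ - 1

/-- S_n := Σ_{p an n-node} |μ(Cyl(p))|. -/
def Svar (μ : Set Omega → ℂ) (n : ℕ) : ℝ :=
  ∑ p : {p : Fin n → Fin n → Prop // IsNode p}, ‖μ (Cyl p.1)‖

theorem sum_eq_of_eq_zero_of_two_le {M : Type*} [AddCommMonoid M] {g : ℕ → M}
    (hg : ∀ j, 2 ≤ j → g j = 0) (s : Finset ℕ) :
    ∑ k ∈ s, g k = (if 0 ∈ s then g 0 else 0) + (if 1 ∈ s then g 1 else 0) := by
  have hsplit : ∀ k, g k = (if k = 0 then g 0 else 0) + (if k = 1 then g 1 else 0) := by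
    rintro (_ | _ | k)
    · simp
    · simp
    · simp [hg (k + 2) (by omega)]
  rw [Finset.sum_congr rfl fun k _ => hsplit k, Finset.sum_add_distrib,
    Finset.sum_ite_eq', Finset.sum_ite_eq']

section SingleCoupling

variable {z : ℂ} {t : ℕ → ℂ}

theorem lam_zero_of_single (ht0 : t 0 = 1) (ht1 : t 1 = z) (ht : ∀ j, 2 ≤ j → t j = 0)
    (n : ℕ) : lam t n 0 = 1 + n * z := by
  rw [lam, sum_eq_of_eq_zero_of_two_le (fun j hj => by simp [ht j hj])]
  rcases n with _ | n <;> simp [ht0, ht1]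

theorem lam_one_of_single (ht1 : t 1 = z) (ht : ∀ j, 2 ≤ j → t j = 0) {w : ℕ} (hw : 1 ≤ w) :
    lam t w 1 = z := by
  rw [lam, sum_eq_of_eq_zero_of_two_le (fun j hj => by simp [ht j hj])]
  simp [ht1, hw]

theorem zetaA_of_single (ht0 : t 0 = 1) (ht1 : t 1 = z) (ht : ∀ j, 2 ≤ j → t j = 0) (n : ℕ) :
    zetaA t n = (1 + n * ‖z‖) / ‖1 + n * z‖ - 1 := by
  rw [zetaA, lam_zero_of_single ht0 ht1 ht,
    sum_eq_of_eq_zero_of_two_le (fun j hj => by simp [ht j hj])]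
  rcases n with _ | n <;> simp [ht0, ht1]

theorem zetaC_of_single (ht0 : t 0 = 1) (ht1 : t 1 = z) (ht : ∀ j, 2 ≤ j → t j = 0) (n : ℕ) :
    zetaC t n = (1 + n * ‖z‖) / ‖1 + n * z‖ - 1 := by
  rw [zetaC, lam_zero_of_single ht0 ht1 ht,
    Finset.sum_congr rfl fun w hw => by rw [lam_one_of_single ht1 ht (Finset.mem_Icc.1 hw).1]]
  simp [ht0]

end SingleCoupling

theorem Complex.re_lt_norm_of_not_exists_nonneg_ofReal {z : ℂ}
    (hz : ¬ ∃ s : ℝ, 0 ≤ s ∧ z = (s : ℂ)) : z.re < ‖z‖ := by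
  refine (Complex.re_le_norm z).lt_of_ne fun hre => hz ⟨z.re, hre ▸ norm_nonneg z, ?_⟩
  open ComplexOrder in
  exact Complex.eq_re_of_ofReal_le (r := 0) (by simpa using Complex.re_eq_norm.1 hre)

theorem one_add_sum_le_prod_one_add {ι : Type*} (s : Finset ι) {a : ι → ℝ}
    (ha : ∀ i ∈ s, 0 ≤ a i) : 1 + ∑ i ∈ s, a i ≤ ∏ i ∈ s, (1 + a i) := by
  induction s using Finset.cons_induction with
  | empty => simp
  | cons x s hx ih =>
    rw [Finset.prod_cons, Finset.sum_cons]
    have hx0 : 0 ≤ a x := ha x (Finset.mem_cons_self x s)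
    have hs : ∀ i ∈ s, 0 ≤ a i := fun i hi => ha i (Finset.mem_cons_of_mem hi)
    nlinarith [ih hs, Finset.sum_nonneg hs]

def normRatio (z : ℂ) (n : ℕ) : ℝ :=
  (1 + n * ‖z‖) / ‖1 + n * z‖

section NormRatio

variable {z : ℂ} {n : ℕ}

theorem norm_one_add_natCast_mul_le (z : ℂ) (n : ℕ) : ‖1 + n * z‖ ≤ 1 + n * ‖z‖ := by
  simpa using norm_add_le (1 : ℂ) (n * z)

theorem sq_norm_one_add_natCast_mul (z : ℂ) (n : ℕ) :
    ‖1 + n * z‖ ^ 2 = (1 + n * ‖z‖) ^ 2 - 2 * n * (‖z‖ - z.re) := by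
  rw [Complex.sq_norm, Complex.normSq_apply, add_sq, mul_pow, Complex.sq_norm,
    Complex.normSq_apply]
  simp only [Complex.add_re, Complex.add_im, Complex.mul_re, Complex.mul_im,
    Complex.natCast_re, Complex.natCast_im, Complex.one_re, Complex.one_im]
  ring

theorem one_le_normRatio (hne : 1 + n * z ≠ 0) : 1 ≤ normRatio z n :=
  (one_le_div (norm_pos_iff.2 hne)).2 (norm_one_add_natCast_mul_le z n)

theorem div_natCast_le_normRatio_sub_one (hne : 1 + n * z ≠ 0) :
    (‖z‖ - z.re) / (1 + ‖z‖) ^ 2 / n ≤ normRatio z n - 1 := by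
  -- at `n = 0` both sides vanish (`c / 0 = 0`), so the bound holds for every `n`
  rcases Nat.eq_zero_or_pos n with rfl | hn
  · simp [normRatio]
  set A : ℝ := 1 + n * ‖z‖
  set B : ℝ := ‖1 + n * z‖
  have hB : 0 < B := norm_pos_iff.2 hne
  have hBA : B ≤ A := norm_one_add_natCast_mul_le z n
  have hAn : A ≤ n * (1 + ‖z‖) := by
    have : (1 : ℝ) ≤ n := by exact_mod_cast hn
    nlinarith [norm_nonneg z]
  have hdiff : A ^ 2 - B ^ 2 = 2 * n * (‖z‖ - z.re) := by
    rw [sq_norm_one_add_natCast_mul]; ring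
  calc (‖z‖ - z.re) / (1 + ‖z‖) ^ 2 / n = n * (‖z‖ - z.re) / (n * (1 + ‖z‖)) ^ 2 := by
        field_simp
    _ ≤ n * (‖z‖ - z.re) / A ^ 2 := by
        gcongr
        exact mul_nonneg n.cast_nonneg (sub_nonneg.2 (Complex.re_le_norm z))
    _ = (A ^ 2 - B ^ 2) / (2 * A ^ 2) := by
        rw [hdiff]; field_simp
    _ ≤ (A - B) / B := by
        rw [div_le_div_iff₀ (by positivity) hB]
        have hAB : 0 ≤ A - B := sub_nonneg.2 hBA
        nlinarith [mul_nonneg (mul_nonneg hAB hAB) (by positivity : (0 : ℝ) ≤ 2 * A + B)]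
    _ = normRatio z n - 1 := by
        rw [normRatio, div_sub_one hB.ne']

theorem not_summable_normRatio_sub_one (hz : ¬ ∃ s : ℝ, 0 ≤ s ∧ z = (s : ℂ))
    (hne : ∀ n : ℕ, 1 + n * z ≠ 0) : ¬ Summable fun n => normRatio z n - 1 := by
  intro hsum
  have hc : 0 < (‖z‖ - z.re) / (1 + ‖z‖) ^ 2 :=
    div_pos (sub_pos.2 (Complex.re_lt_norm_of_not_exists_nonneg_ofReal hz)) (by positivity)
  refine Real.not_summable_one_div_natCast ((summable_mul_left_iff hc.ne').1 ?_)
  refine hsum.of_nonneg_of_le (fun n => by positivity) fun n => ?_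
  simpa only [mul_one_div] using div_natCast_le_normRatio_sub_one (hne n)

theorem tendsto_sum_range_normRatio_sub_one (hz : ¬ ∃ s : ℝ, 0 ≤ s ∧ z = (s : ℂ))
    (hne : ∀ n : ℕ, 1 + n * z ≠ 0) :
    Tendsto (fun N => ∑ n ∈ Finset.range N, (normRatio z n - 1)) atTop atTop :=
  (not_summable_iff_tendsto_nat_atTop_of_nonneg
    fun n => sub_nonneg.2 (one_le_normRatio (hne n))).1 (not_summable_normRatio_sub_one hz hne)

theorem tendsto_sum_Ico_normRatio_sub_one (hz : ¬ ∃ s : ℝ, 0 ≤ s ∧ z = (s : ℂ))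
    (hne : ∀ n : ℕ, 1 + n * z ≠ 0) :
    Tendsto (fun N => ∑ n ∈ Finset.Ico 1 N, (normRatio z n - 1)) atTop atTop := by
  refine (tendsto_sum_range_normRatio_sub_one hz hne).congr fun N =>
    (Finset.sum_subset (fun n hn => ?_) fun n hn hn' => ?_).symm
  · simp only [Finset.mem_Ico, Finset.mem_range] at hn ⊢
    exact hn.2
  · obtain rfl : n = 0 := by simp only [Finset.mem_Ico, Finset.mem_range] at hn hn'; omega
    simp [normRatio]

theorem tendsto_prod_normRatio (hz : ¬ ∃ s : ℝ, 0 ≤ s ∧ z = (s : ℂ))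
    (hne : ∀ n : ℕ, 1 + n * z ≠ 0) :
    Tendsto (fun N => ∏ n ∈ Finset.range N, normRatio z n) atTop atTop := by
  refine tendsto_atTop_mono (fun N => ?_)
    (tendsto_atTop_add_const_left _ 1 (tendsto_sum_range_normRatio_sub_one hz hne))
  calc 1 + ∑ n ∈ Finset.range N, (normRatio z n - 1)
      ≤ ∏ n ∈ Finset.range N, (1 + (normRatio z n - 1)) :=
        one_add_sum_le_prod_one_add _ fun n _ => sub_nonneg.2 (one_le_normRatio (hne n))
    _ = ∏ n ∈ Finset.range N, normRatio z n := by simp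

end NormRatio

section Forest

variable {n : ℕ}

/-- Forests on `Fin n` are encoded by `f`, giving every `m` either no parent or a parent `i < m`. -/
def parent (f : ∀ m : Fin n, Option (Fin m)) (m : Fin n) : Option (Fin n) :=
  (f m).map (Fin.castLE m.isLt.le)

def forestOrder (f : ∀ m : Fin n, Option (Fin m)) : Fin n → Fin n → Prop :=
  Relation.TransGen fun a b => a ∈ parent f b

variable (f : ∀ m : Fin n, Option (Fin m))

theorem val_lt_of_mem_parent {a m : Fin n} (h : a ∈ parent f m) : (a : ℕ) < m := by
  obtain ⟨i, -, rfl⟩ := Option.map_eq_some_iff.1 h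
  exact i.isLt

theorem val_lt_of_forestOrder {a b : Fin n} (h : forestOrder f a b) : (a : ℕ) < b := by
  induction h with
  | single h => exact val_lt_of_mem_parent f h
  | tail _ h ih => exact ih.trans (val_lt_of_mem_parent f h)

theorem isNode_forestOrder : IsNode (forestOrder f) :=
  ⟨fun _ h => (val_lt_of_forestOrder f h).false, fun _ _ _ => Relation.TransGen.trans,
    fun _ _ => val_lt_of_forestOrder f⟩

theorem forestOrder_iff {a m : Fin n} :
    forestOrder f a m ↔ ∃ i ∈ parent f m, a = i ∨ forestOrder f a i := by
  rw [forestOrder, Relation.TransGen.tail'_iff]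
  simp_rw [Relation.reflTransGen_iff_eq_or_transGen]
  exact ⟨fun ⟨i, hai, hi⟩ => ⟨i, hi, hai.imp_left Eq.symm⟩,
    fun ⟨i, hi, hai⟩ => ⟨i, hai.imp_left Eq.symm, hi⟩⟩

theorem pastOf_forestOrder_eq_empty {m : Fin n} (hm : parent f m = none) :
    pastOf (forestOrder f) m = ∅ := by
  ext a
  simp only [pastOf, Finset.mem_filter, Finset.mem_univ, true_and, Finset.notMem_empty,
    iff_false]
  rw [forestOrder_iff, hm]
  simp

theorem mem_pastOf_forestOrder_of_mem_parent {i m : Fin n} (hi : i ∈ parent f m) :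
    i ∈ pastOf (forestOrder f) m :=
  Finset.mem_filter.2 ⟨Finset.mem_univ _, (Relation.TransGen.single hi : forestOrder f i m)⟩

theorem maxIn_pastOf_forestOrder (m : Fin n) :
    maxIn (forestOrder f) (pastOf (forestOrder f) m) = (parent f m).toFinset := by
  ext a
  simp only [maxIn, pastOf, Finset.mem_filter, Finset.mem_univ, true_and, Option.mem_toFinset]
  constructor
  · rintro ⟨ham, hmax⟩
    obtain ⟨i, hi, rfl | hai⟩ := (forestOrder_iff f).1 ham
    · exact hi
    · exact absurd hai (hmax i (Relation.TransGen.single hi))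
  · intro ha
    refine ⟨Relation.TransGen.single ha, fun j hjm haj => ?_⟩
    obtain ⟨i, hi, rfl | hji⟩ := (forestOrder_iff f).1 hjm
    · obtain rfl : a = j := Option.some_injective _ (ha.symm.trans hi)
      exact (isNode_forestOrder f).1 a haj
    · obtain rfl : a = i := Option.some_injective _ (ha.symm.trans hi)
      exact (val_lt_of_forestOrder f haj).not_gt (val_lt_of_forestOrder f hji)

theorem forestOrder_injective : Function.Injective (forestOrder (n := n)) := by
  intro f g h
  funext m
  have hpar : parent f m = parent g m := Option.ext fun a => by
    rw [← Option.mem_def, ← Option.mem_def, ← Option.mem_toFinset, ← Option.mem_toFinset,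
      ← maxIn_pastOf_forestOrder, ← maxIn_pastOf_forestOrder, h]
  exact Option.map_injective (Fin.castLE_injective _) hpar

end Forest

section ForestAmplitude

variable {z : ℂ} {t : ℕ → ℂ} {n : ℕ}

theorem norm_lam_forestOrder (ht0 : t 0 = 1) (ht1 : t 1 = z) (ht : ∀ j, 2 ≤ j → t j = 0)
    (f : ∀ m : Fin n, Option (Fin m)) (m : Fin n) :
    ‖lam t (pastOf (forestOrder f) m).card
        (maxIn (forestOrder f) (pastOf (forestOrder f) m)).card‖ = (f m).elim 1 fun _ => ‖z‖ := by
  rw [maxIn_pastOf_forestOrder]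
  cases hfm : f m with
  | none =>
    have hpar : parent f m = none := by simp [parent, hfm]
    simp [pastOf_forestOrder_eq_empty f hpar, hpar, lam, ht0]
  | some i =>
    have hpar : parent f m = some (Fin.castLE m.isLt.le i) := by simp [parent, hfm]
    have hpast : 1 ≤ (pastOf (forestOrder f) m).card :=
      Finset.card_pos.2 ⟨_, mem_pastOf_forestOrder_of_mem_parent f hpar⟩
    simp [hpar, lam_one_of_single ht1 ht hpast]

theorem norm_amp_forestOrder (ht0 : t 0 = 1) (ht1 : t 1 = z) (ht : ∀ j, 2 ≤ j → t j = 0)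
    (f : ∀ m : Fin n, Option (Fin m)) :
    ‖amp t (forestOrder f)‖ = ∏ m : Fin n, ((f m).elim 1 fun _ => ‖z‖) / ‖1 + (m : ℕ) * z‖ := by
  rw [amp, norm_prod, Finset.prod_filter]
  refine Finset.prod_congr rfl fun m _ => ?_
  split_ifs with hm
  · rw [norm_div, norm_lam_forestOrder ht0 ht1 ht, lam_zero_of_single ht0 ht1 ht]
  · cases hfm : f m with
    | none => simp [show (m : ℕ) = 0 by omega]
    | some i => exact absurd i.isLt (by omega)

theorem sum_norm_amp_forestOrder (ht0 : t 0 = 1) (ht1 : t 1 = z) (ht : ∀ j, 2 ≤ j → t j = 0) :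
    ∑ f : ∀ m : Fin n, Option (Fin m), ‖amp t (forestOrder f)‖
      = ∏ m ∈ Finset.range n, normRatio z m := by
  rw [Finset.sum_congr rfl fun f _ => norm_amp_forestOrder ht0 ht1 ht f,
    ← Fintype.prod_sum fun (m : Fin n) (o : Option (Fin m)) =>
      (o.elim 1 fun _ => ‖z‖) / ‖1 + (m : ℕ) * z‖,
    ← Fin.prod_univ_eq_prod_range]
  refine Finset.prod_congr rfl fun m _ => ?_
  rw [Fintype.sum_option]
  simp [normRatio, add_div, mul_div_assoc]

end ForestAmplitude

section Cylinders

variable {n : ℕ}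

theorem eq_of_mem_cyl {p q : Fin n → Fin n → Prop} {r : Omega} (hp : r ∈ Cyl p)
    (hq : r ∈ Cyl q) : p = q :=
  funext₂ fun i j => propext ((hp i j).symm.trans (hq i j))

theorem isNode_restrict (r : Omega) : IsNode fun i j : Fin n => r.1 i j :=
  ⟨fun i => r.2.1 i, fun _ _ _ => r.2.2.1 _ _ _, fun _ _ => r.2.2.2 _ _⟩

theorem cyl_nonempty {p : Fin n → Fin n → Prop} (hp : IsNode p) : (Cyl p).Nonempty := by
  refine ⟨⟨fun a b => ∃ (ha : a < n) (hb : b < n), p ⟨a, ha⟩ ⟨b, hb⟩, ?_, ?_, ?_⟩, ?_⟩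
  · rintro i ⟨_, _, hi⟩
    exact hp.1 _ hi
  · rintro i j k ⟨hi, _, hij⟩ ⟨_, hk, hjk⟩
    exact ⟨hi, hk, hp.2.1 _ _ _ hij hjk⟩
  · rintro i j ⟨_, _, hij⟩
    exact hp.2.2 _ _ hij
  · exact fun i j => ⟨fun ⟨_, _, h⟩ => h, fun h => ⟨i.2, j.2, h⟩⟩

theorem cyl_injective :
    Function.Injective fun p : {p : Fin n → Fin n → Prop // IsNode p} => Cyl p.1 := by
  intro p q h
  obtain ⟨r, hr⟩ := cyl_nonempty p.2
  have hpq : Cyl p.1 = Cyl q.1 := h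
  exact Subtype.ext (eq_of_mem_cyl hr (hpq ▸ hr))

theorem isPartition_cyl (hn : 1 ≤ n) :
    IsPartition (Finset.univ.image fun p : {p : Fin n → Fin n → Prop // IsNode p} => Cyl p.1) := by
  refine ⟨?_, ?_, ?_⟩
  · simp only [Finset.mem_image, Finset.mem_univ, true_and, forall_exists_index]
    rintro _ p rfl
    exact InAlg.basic hn p.1 p.2
  · simp only [Finset.coe_image, Finset.coe_univ, Set.image_univ]
    rintro _ ⟨p, rfl⟩ _ ⟨q, rfl⟩ hpq
    exact Set.disjoint_left.2 fun r hp hq => hpq (congrArg Cyl (eq_of_mem_cyl hp hq))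
  · refine Set.eq_univ_of_forall fun r => Set.mem_sUnion.2
      ⟨Cyl fun i j : Fin n => r.1 i j, ?_, fun _ _ => Iff.rfl⟩
    exact Finset.mem_coe.2 (Finset.mem_image_of_mem _ (Finset.mem_univ
      (⟨_, isNode_restrict r⟩ : {p : Fin n → Fin n → Prop // IsNode p})))

theorem svar_le_of_boundedVariation {μ : Set Omega → ℂ} (hμ : BoundedVariation μ) :
    ∃ M, ∀ n, 1 ≤ n → Svar μ n ≤ M := by
  obtain ⟨M, hM⟩ := hμ
  refine ⟨M, fun n hn => ?_⟩
  have := hM _ (isPartition_cyl hn)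
  rwa [Finset.sum_image fun p _ q _ h => cyl_injective h] at this

theorem prod_normRatio_le_svar {z : ℂ} {t : ℕ → ℂ} {μ : Set Omega → ℂ} (hμ : IsCSG t μ)
    (ht0 : t 0 = 1) (ht1 : t 1 = z) (ht : ∀ j, 2 ≤ j → t j = 0) (hn : 1 ≤ n) :
    ∏ m ∈ Finset.range n, normRatio z m ≤ Svar μ n := by
  let e : (∀ m : Fin n, Option (Fin m)) ↪ {p : Fin n → Fin n → Prop // IsNode p} :=
    ⟨fun f => ⟨forestOrder f, isNode_forestOrder f⟩,
      fun f g h => forestOrder_injective (congrArg Subtype.val h)⟩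
  calc ∏ m ∈ Finset.range n, normRatio z m
      = ∑ f : ∀ m : Fin n, Option (Fin m), ‖μ (Cyl (forestOrder f))‖ := by
        rw [← sum_norm_amp_forestOrder ht0 ht1 ht]
        exact Finset.sum_congr rfl fun f _ => by rw [hμ.2 n hn _ (isNode_forestOrder f)]
    _ = ∑ p ∈ Finset.univ.map e, ‖μ (Cyl p.1)‖ := by
        rw [Finset.sum_map]; rfl
    _ ≤ Svar μ n :=
        Finset.sum_le_sum_of_subset_of_nonneg (Finset.subset_univ _) fun _ _ _ => norm_nonneg _

end Cylinders

theorem not_boundedVariation_of_single {z : ℂ} (hz : ¬ ∃ s : ℝ, 0 ≤ s ∧ z = (s : ℂ))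
    (hne : ∀ n : ℕ, 1 + n * z ≠ 0) {t : ℕ → ℂ} (ht0 : t 0 = 1) (ht1 : t 1 = z)
    (ht : ∀ j, 2 ≤ j → t j = 0) {μ : Set Omega → ℂ} (hμ : IsCSG t μ) : ¬ BoundedVariation μ := by
  intro hbv
  obtain ⟨M, hM⟩ := svar_le_of_boundedVariation hbv
  obtain ⟨N, hNM, hN⟩ := (((tendsto_prod_normRatio hz hne).eventually_gt_atTop M).and
    (eventually_ge_atTop 1)).exists
  exact (hNM.trans_le ((prod_normRatio_le_svar hμ ht0 ht1 ht hN).trans (hM N hN))).false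

theorem statement_12_general (z : ℂ) (hznr : ¬ ∃ s : ℝ, 0 ≤ s ∧ z = (s : ℂ))
    (t : ℕ → ℂ) (ht0 : t 0 = 1) (ht1 : t 1 = z)
    (ht : ∀ j : ℕ, 2 ≤ j → t j = 0)
    (hne : ∀ n : ℕ, 1 + (n : ℂ) * z ≠ 0) :
    (∀ n : ℕ, zetaA t n =
        (1 + (n : ℝ) * ‖z‖) / ‖1 + (n : ℂ) * z‖ - 1 ∧
      zetaC t n =
        (1 + (n : ℝ) * ‖z‖) / ‖1 + (n : ℂ) * z‖ - 1) ∧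
    ¬ (∃ L : ℝ, Filter.Tendsto (fun N : ℕ => ∑ n ∈ Finset.Ico 1 N,
        ((1 + (n : ℝ) * ‖z‖) / ‖1 + (n : ℂ) * z‖ - 1))
        Filter.atTop (nhds L)) ∧
    (∀ μ : Set Omega → ℂ, IsCSG t μ → ¬ BoundedVariation μ) :=
  ⟨fun n => ⟨zetaA_of_single ht0 ht1 ht n, zetaC_of_single ht0 ht1 ht n⟩,
    fun ⟨_, hL⟩ =>
      not_tendsto_nhds_of_tendsto_atTop (tendsto_sum_Ico_normRatio_sub_one hznr hne) _ hL,
    fun _ => not_boundedVariation_of_single hznr hne ht0 ht1 ht⟩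

/-- single coupling t_1 = z, z ≠ 0 not a nonnegative real: ζ_n^a = ζ_n^c
has the stated closed form, the series Σ_{n≥1} ((1+n|z|)/|1+nz| − 1) diverges, and the
associated ℂSG measure is not of bounded variation. -/
theorem statement_12 (z : ℂ) (hz : z ≠ 0) (hznr : ¬ ∃ s : ℝ, 0 ≤ s ∧ z = (s : ℂ))
    (t : ℕ → ℂ) (ht0 : t 0 = 1) (ht1 : t 1 = z)
    (ht : ∀ j : ℕ, 2 ≤ j → t j = 0)
    (hne : ∀ n : ℕ, 1 + (n : ℂ) * z ≠ 0) :
    (∀ n : ℕ, zetaA t n =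
        (1 + (n : ℝ) * ‖z‖) / ‖1 + (n : ℂ) * z‖ - 1 ∧
      zetaC t n =
        (1 + (n : ℝ) * ‖z‖) / ‖1 + (n : ℂ) * z‖ - 1) ∧
    ¬ (∃ L : ℝ, Filter.Tendsto (fun N : ℕ => ∑ n ∈ Finset.Ico 1 N,
        ((1 + (n : ℝ) * ‖z‖) / ‖1 + (n : ℂ) * z‖ - 1))
        Filter.atTop (nhds L)) ∧
    (∀ μ : Set Omega → ℂ, IsCSG t μ → ¬ BoundedVariation μ) :=
  statement_12_general z hznr t ht0 ht1 ht hne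

end
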